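/- Let (X,d) be a δ-hyperbolic metric space. For every Q ≥ 1 and C ≥ 0 there exists a constant D = D(δ,Q,C) such that: (1) if y and z belong to a shadow S_o(x,R), then any (Q,C)-quasigeodesic segment between y and z is contained in S_o(x,R+D); (2) if y and z do not belong to S_o(x,R), then any (Q,C)-quasigeodesic segment between y and z is disjoint from S_o(x,R−D). -/

import Mathlib

/-!
Everything rests on a Morse lemma in Gromov-product form: there is `K = K(δ, Q, C)` with
`(γ a | γ b)_{γ t} ≤ K` for every `(Q,C)`-quasigeodesic `γ : [a,b] → X` and every `t`. Given it,
the four-point condition at `x` and at `γ t` compares `(γ t | o)_x` with `(γ a | o)_x` and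
`(γ b | o)_x` up to `2K + 3δ`, which gives both statements.

The Morse lemma is proved directly, without embedding `X` into a geodesic space. Put
`r = (γ a | γ b)_{γ t}`. A chain of `n` points of `γ` from `γ a` to `γ t` with steps `≤ 2C + 1`
first enters the ball of radius `r` about `γ t` at a point `u` with
`(γ a | u)_{γ t} ≥ r - O(1) - δ log₂ n`, by the doubling argument for chains; similarly a point `v`
on the other side. Then `d(u, v) = O(1 + δ log₂ n)`, while the parameters of `u` and `v` are
`2r/Q - O(1)` apart, so `r = O(Q² (1 + δ log (b - a)))`. Since this grows only logarithmically,
a window length `Λ` with `Λ/Q` larger than twice the bound for windows of length `2Λ` exists, and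
then the window bound propagates along `γ` one step of length `Λ` at a time.
-/

open Filter Set

namespace Stmt8

variable {X : Type*} [MetricSpace X]

/-- The Gromov product `(x|y)_o = (d(x,o) + d(y,o) - d(x,y)) / 2`. -/
noncomputable def gp (o x y : X) : ℝ := (dist x o + dist y o - dist x y) / 2

/-- `X` is `δ`-hyperbolic in the sense of the four-point Gromov product inequality. -/
def IsGromovHyperbolicWith (X : Type*) [MetricSpace X] (δ : ℝ) : Prop :=
  ∀ o x y z : X, min (gp o x z) (gp o z y) - δ ≤ gp o x y

/-- The `R`-shadow of `x` seen from `o`: `S_o(x,R) = {y | (y|o)_x ≤ R}`. -/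
def shadow (o x : X) (R : ℝ) : Set X := {y | gp x y o ≤ R}

/-- `γ : [a,b] → X` is a `(Q,C)`-quasigeodesic segment. -/
def IsQuasiGeodesicOn (Q C : ℝ) (γ : ℝ → X) (a b : ℝ) : Prop :=
  ∀ s ∈ Icc a b, ∀ t ∈ Icc a b,
    Q⁻¹ * |s - t| - C ≤ dist (γ s) (γ t) ∧ dist (γ s) (γ t) ≤ Q * |s - t| + C

lemma exists_add_mul_le_two_pow (c₁ c₂ : ℝ) : ∃ k : ℕ, c₁ + c₂ * k ≤ 2 ^ k := by
  have hconst : (fun _ : ℕ => c₁) =o[atTop] fun k => (2 : ℝ) ^ k :=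
    Asymptotics.isLittleO_const_left.2 <| Or.inr <| by
      simpa [Function.comp_def] using tendsto_pow_atTop_atTop_of_one_lt (one_lt_two (α := ℝ))
  have hlin := (isLittleO_coe_const_pow_of_one_lt (R := ℝ) one_lt_two).const_mul_left c₂
  obtain ⟨k, hk⟩ := ((hconst.add hlin).bound one_pos).exists
  refine ⟨k, ?_⟩
  simp only [Real.norm_eq_abs, one_mul, abs_pow, abs_two] at hk
  exact (le_abs_self _).trans hk

lemma mem_shadow {o x y : X} {R : ℝ} : y ∈ shadow o x R ↔ gp x y o ≤ R := Iff.rfl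

lemma gp_nonneg (o x y : X) : 0 ≤ gp o x y := by
  unfold gp; linarith [dist_triangle x o y, dist_comm o y]

lemma gp_comm (o x y : X) : gp o x y = gp o y x := by
  unfold gp; rw [dist_comm x y]; ring

lemma gp_le_dist_left (o x y : X) : gp o x y ≤ dist x o := by
  unfold gp; linarith [dist_triangle y x o, dist_comm y x]

lemma gp_le_dist_right (o x y : X) : gp o x y ≤ dist y o :=
  gp_comm o x y ▸ gp_le_dist_left o y x

lemma gp_add_gp (w x y : X) : gp w y x + gp x y w = dist x w := by
  unfold gp; rw [dist_comm w x]; ring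

lemma gp_le_gp_add_dist (x w y z : X) : gp x y z ≤ gp w y z + dist x w := by
  unfold gp; linarith [dist_triangle y w x, dist_triangle z w x, dist_comm w x]

namespace IsGromovHyperbolicWith

variable {δ : ℝ}

lemma nonneg (hX : IsGromovHyperbolicWith X δ) (o : X) : 0 ≤ δ := by
  simpa [gp] using hX o o o o

lemma gp_le_of_lt (hX : IsGromovHyperbolicWith X δ) {w y v z : X} {K : ℝ}
    (hyv : gp w y v ≤ K) (hvz : K + δ < gp w v z) : gp w y z ≤ K + δ := by
  by_contra! h
  have h₄ := hX w y v z
  rw [gp_comm w z v] at h₄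
  linarith [lt_min h hvz]

lemma gp_le_of_lt_dist (hX : IsGromovHyperbolicWith X δ) {w y v z : X} {K K' : ℝ}
    (hyv : gp w y v ≤ K) (hwz : gp v w z ≤ K') (hvw : K + K' + δ < dist v w) :
    gp w y z ≤ K + δ :=
  hX.gp_le_of_lt hyv (by linarith [gp_add_gp w v z, gp_comm w z v, gp_comm v z w])

lemma gp_le_max_add (hX : IsGromovHyperbolicWith X δ) {w y z : X} {K : ℝ}
    (hK : gp w y z ≤ K) (x o : X) :
    gp x w o ≤ max (gp x y o) (gp x z o) + K + 2 * δ := by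
  set M := max (gp x y o) (gp x z o)
  have hδ := hX.nonneg x
  have hK₀ := (gp_nonneg w y z).trans hK
  rcases le_or_gt (gp x w o) (M + δ) with h | h
  · linarith
  have far : ∀ p, gp x p o ≤ M → dist x w - (M + δ) ≤ gp w p x := fun p hp => by
    have := hX.gp_le_of_lt hp (by rwa [gp_comm])
    linarith [gp_add_gp w x p, gp_comm x p w]
  have h₄ := hX w y z x
  have := le_min (far y (le_max_left _ _)) ((far z (le_max_right _ _)).trans_eq (gp_comm w z x))
  linarith [gp_le_dist_left x w o, dist_comm w x]

lemma min_sub_le_gp (hX : IsGromovHyperbolicWith X δ) {w y z : X} {K : ℝ}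
    (hK : gp w y z ≤ K) (x o : X) :
    min (gp x y o) (gp x z o) - (2 * K + 3 * δ) ≤ gp x w o := by
  set m := min (gp x y o) (gp x z o)
  have hδ := hX.nonneg x
  have hK₀ := (gp_nonneg w y z).trans hK
  have hyz : m - δ ≤ gp x y z := by
    have := hX x y z o
    rw [gp_comm x o z] at this
    linarith
  have hxw : m - δ - K ≤ dist x w := by linarith [gp_le_gp_add_dist x w y z]
  have near : ∀ p, m ≤ gp x p o → gp w p x ≤ K + δ → m - (2 * K + 3 * δ) ≤ gp x w o := by
    intro p hp hpw
    have hwp : m - 2 * K - 2 * δ ≤ gp x w p := by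
      linarith [gp_add_gp w x p, gp_comm x p w]
    linarith [hX x w o p, le_min hwp (show m - 2 * K - 2 * δ ≤ gp x p o by linarith)]
  have h₄ := hX w y z x
  rcases min_le_iff.1 (show min (gp w y x) (gp w x z) ≤ K + δ by linarith) with h | h
  · exact near y (min_le_left _ _) h
  · exact near z (min_le_right _ _) (by rwa [gp_comm])

lemma le_gp_of_chain (hX : IsGromovHyperbolicWith X δ) (w : X) (y : ℕ → X) {m : ℝ}
    {k n : ℕ} (hn : 0 < n) (hnk : n ≤ 2 ^ k) (hy : ∀ i < n, m ≤ gp w (y i) (y (i + 1))) :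
    m - δ * k ≤ gp w (y 0) (y n) := by
  induction k generalizing y n with
  | zero =>
    obtain rfl : n = 1 := by simp only [pow_zero] at hnk; omega
    simpa using hy 0 one_pos
  | succ k ih =>
    have hδ := hX.nonneg w
    rcases le_or_gt n (2 ^ k) with hn' | hn'
    · have := ih y hn hn' hy
      push_cast
      linarith
    · have h₁ := ih y (Nat.two_pow_pos k) le_rfl fun i hi => hy i (by omega)
      have h₂ := ih (fun i => y (2 ^ k + i)) (n := n - 2 ^ k) (by omega)
        (by rw [pow_succ] at hnk; omega)
        fun i hi => by simpa [add_assoc] using hy (2 ^ k + i) (by omega)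
      simp only [add_zero, Nat.add_sub_cancel' hn'.le] at h₂
      push_cast
      linarith [hX w (y 0) (y n) (y (2 ^ k)), le_min h₁ h₂]

lemma exists_chain_crossing (hX : IsGromovHyperbolicWith X δ) (w : X) (y : ℕ → X)
    {n k : ℕ} {ε r : ℝ} (hnk : n ≤ 2 ^ k) (hy : ∀ i < n, dist (y i) (y (i + 1)) ≤ ε)
    (h₀ : r ≤ dist (y 0) w) (hn : dist (y n) w < r) :
    ∃ i ≤ n, r - ε ≤ dist (y i) w ∧ dist (y i) w < r ∧ r - ε - δ * k ≤ gp w (y 0) (y i) := by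
  classical
  -- the first point inside the ball: every earlier link lies outside it, so its Gromov product
  -- at `w` is at least `r - ε`
  have hex : ∃ i, dist (y i) w < r := ⟨n, hn⟩
  set i := Nat.find hex
  have hi : dist (y i) w < r := Nat.find_spec hex
  have hin : i ≤ n := Nat.find_min' hex hn
  have before : ∀ j < i, r ≤ dist (y j) w := fun j hj => not_lt.1 (Nat.find_min hex hj)
  have hi₀ : 0 < i := Nat.pos_of_ne_zero fun h => (h ▸ hi).not_ge h₀
  have hlow : r - ε ≤ dist (y i) w := by
    have h₁ := before (i - 1) (by omega)
    have h₂ := hy (i - 1) (by omega)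
    rw [Nat.sub_add_cancel hi₀] at h₂
    linarith [dist_triangle (y (i - 1)) (y i) w]
  refine ⟨i, hin, hlow, hi, hX.le_gp_of_chain w y hi₀ (hin.trans hnk) fun j hj => ?_⟩
  have hε : dist (y j) (y (j + 1)) ≤ ε := hy j (by omega)
  have hj₁ : r - ε ≤ dist (y (j + 1)) w := by
    rcases Nat.lt_or_ge (j + 1) i with h | h
    · linarith [before (j + 1) h, dist_nonneg (x := y j) (y := y (j + 1))]
    · rwa [show j + 1 = i by omega]
  unfold gp
  linarith [before j hj]

end IsGromovHyperbolicWith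

namespace IsQuasiGeodesicOn

variable {Q C : ℝ} {γ : ℝ → X} {a b : ℝ}

lemma mono (hγ : IsQuasiGeodesicOn Q C γ a b) {a' b' : ℝ} (h : Icc a' b' ⊆ Icc a b) :
    IsQuasiGeodesicOn Q C γ a' b' :=
  fun s hs t ht => hγ s (h hs) t (h ht)

lemma reverse (hγ : IsQuasiGeodesicOn Q C γ a b) :
    IsQuasiGeodesicOn Q C (fun s => γ (a + b - s)) a b := by
  intro s hs t ht
  have hs' : a + b - s ∈ Icc a b := ⟨by linarith [hs.2], by linarith [hs.1]⟩
  have ht' : a + b - t ∈ Icc a b := ⟨by linarith [ht.2], by linarith [ht.1]⟩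
  rw [← abs_neg, show -(s - t) = a + b - s - (a + b - t) by ring]
  exact hγ _ hs' _ ht'

lemma dist_le (hγ : IsQuasiGeodesicOn Q C γ a b) {s t : ℝ} (hs : s ∈ Icc a b)
    (ht : t ∈ Icc a b) : dist (γ s) (γ t) ≤ Q * |s - t| + C :=
  (hγ s hs t ht).2

lemma abs_sub_le (hγ : IsQuasiGeodesicOn Q C γ a b) (hQ : 0 < Q) {s t : ℝ}
    (hs : s ∈ Icc a b) (ht : t ∈ Icc a b) : |s - t| ≤ Q * (dist (γ s) (γ t) + C) :=
  calc |s - t| = Q * (Q⁻¹ * |s - t|) := by field_simp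
    _ ≤ Q * (dist (γ s) (γ t) + C) := by gcongr; linarith [(hγ s hs t ht).1]

lemma lt_dist (hγ : IsQuasiGeodesicOn Q C γ a b) (hQ : 0 < Q) {s t L : ℝ}
    (hs : s ∈ Icc a b) (ht : t ∈ Icc a b) (hL : Q * (L + C) < |s - t|) :
    L < dist (γ s) (γ t) := by
  have := hL.trans_le (hγ.abs_sub_le hQ hs ht)
  linarith [lt_of_mul_lt_mul_left this hQ.le]

lemma exists_chain (hγ : IsQuasiGeodesicOn Q C γ a b) (hab : a ≤ b) (hC : 0 ≤ C) {k : ℕ}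
    (hk : Q * (b - a) ≤ (C + 1) * 2 ^ k) :
    ∃ n ≤ 2 ^ k, ∃ p : ℕ → ℝ, p 0 = a ∧ p n = b ∧ (∀ i ≤ n, p i ∈ Icc a b) ∧
      ∀ i < n, dist (γ (p i)) (γ (p (i + 1))) ≤ 2 * C + 1 := by
  have hC₁ : 0 < C + 1 := by linarith
  set n := max 1 ⌈Q * (b - a) / (C + 1)⌉₊
  have hn : (0 : ℝ) < n := Nat.cast_pos.2 (lt_max_of_lt_left one_pos)
  have hnk : n ≤ 2 ^ k := max_le Nat.one_le_two_pow <| Nat.ceil_le.2 <| by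
    rw [div_le_iff₀ hC₁]; push_cast; linarith
  set h := (b - a) / n
  have hh : 0 ≤ h := div_nonneg (by linarith) hn.le
  have hQh : Q * h ≤ C + 1 := by
    have := (Nat.le_ceil (Q * (b - a) / (C + 1))).trans
      (Nat.cast_le.2 (le_max_right 1 ⌈Q * (b - a) / (C + 1)⌉₊))
    rw [div_le_iff₀ hC₁] at this
    rw [← mul_div_assoc, div_le_iff₀ hn]
    linarith
  have hnh : (n : ℝ) * h = b - a := mul_div_cancel₀ _ hn.ne'
  have hmem : ∀ i ≤ n, a + i * h ∈ Icc a b := fun i hi =>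
    ⟨by nlinarith [(Nat.cast_nonneg i : (0 : ℝ) ≤ i)],
      by nlinarith [(Nat.cast_le (α := ℝ)).2 hi]⟩
  refine ⟨n, hnk, fun i => a + i * h, by simp, by simp only [hnh]; ring, hmem, fun i hi => ?_⟩
  have := hγ.dist_le (hmem i hi.le) (hmem (i + 1) hi)
  rw [show a + i * h - (a + ↑(i + 1) * h) = -h by push_cast; ring, abs_neg, abs_of_nonneg hh]
    at this
  linarith

end IsQuasiGeodesicOn

section Morse

variable {δ Q C : ℝ} {γ : ℝ → X} {a b t : ℝ}

lemma IsQuasiGeodesicOn.exists_crossing_left (hX : IsGromovHyperbolicWith X δ) (hC : 0 ≤ C)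
    (hγ : IsQuasiGeodesicOn Q C γ a b) (ht : t ∈ Icc a b) {k : ℕ}
    (hk : Q * (t - a) ≤ (C + 1) * 2 ^ k) {r : ℝ} (hr : r ≤ dist (γ a) (γ t)) (hr₀ : 0 < r) :
    ∃ s ∈ Icc a t, r - (2 * C + 1) ≤ dist (γ s) (γ t) ∧ dist (γ s) (γ t) < r ∧
      r - (2 * C + 1) - δ * k ≤ gp (γ t) (γ a) (γ s) := by
  obtain ⟨n, hnk, p, hp₀, hpn, hpI, hstep⟩ :=
    (hγ.mono (Icc_subset_Icc_right ht.2)).exists_chain ht.1 hC hk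
  obtain ⟨i, hin, h⟩ := hX.exists_chain_crossing (γ t) (fun i => γ (p i)) (r := r) hnk hstep
    (by rwa [hp₀]) (by simpa [hpn] using hr₀)
  exact ⟨p i, hpI i hin, by simpa only [hp₀] using h⟩

lemma IsQuasiGeodesicOn.exists_crossing_right (hX : IsGromovHyperbolicWith X δ) (hC : 0 ≤ C)
    (hγ : IsQuasiGeodesicOn Q C γ a b) (ht : t ∈ Icc a b) {k : ℕ}
    (hk : Q * (b - t) ≤ (C + 1) * 2 ^ k) {r : ℝ} (hr : r ≤ dist (γ b) (γ t)) (hr₀ : 0 < r) :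
    ∃ s ∈ Icc t b, r - (2 * C + 1) ≤ dist (γ s) (γ t) ∧ dist (γ s) (γ t) < r ∧
      r - (2 * C + 1) - δ * k ≤ gp (γ t) (γ b) (γ s) := by
  have hrev : a + b - (a + b - t) = t := by ring
  obtain ⟨s, hs, h⟩ := hγ.reverse.exists_crossing_left hX hC (t := a + b - t)
    ⟨by linarith [ht.2], by linarith [ht.1]⟩ (by rwa [show a + b - t - a = b - t by ring])
    (by simpa only [hrev, add_sub_cancel_left] using hr) hr₀
  simp only [hrev, add_sub_cancel_left] at h
  exact ⟨a + b - s, ⟨by linarith [hs.2], by linarith [hs.1]⟩, h⟩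

/-- In a geodesic space `(γ a | γ b)_{γ t}` is, up to `O(δ)`, the distance from `γ t` to a
geodesic from `γ a` to `γ b`: this is the Morse property for segments of parameter length at
most `L`. -/
def ThinQuasiGeodesics (X : Type*) [MetricSpace X] (Q C L K : ℝ) : Prop :=
  ∀ (γ : ℝ → X) (a b : ℝ), b - a ≤ L → IsQuasiGeodesicOn Q C γ a b →
    ∀ t ∈ Icc a b, gp (γ t) (γ a) (γ b) ≤ K

lemma IsGromovHyperbolicWith.thinQuasiGeodesics_of_le_two_pow (hX : IsGromovHyperbolicWith X δ)
    (hQ : 1 ≤ Q) (hC : 0 ≤ C) {L : ℝ} {k : ℕ} (hk : Q * L ≤ (C + 1) * 2 ^ k) :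
    ThinQuasiGeodesics X Q C L (Q ^ 2 * (6 * C + 2 + δ * (k + 2))) := by
  intro γ a b hL hγ t ht
  have hQ₀ : 0 < Q := by linarith
  have hδ := hX.nonneg (γ t)
  have hδk : 0 ≤ δ * k := by positivity
  have hQ₂ : 1 ≤ Q ^ 2 := one_le_pow₀ hQ
  set r := gp (γ t) (γ a) (γ b)
  suffices hr : r ≤ 3 * C + 1 + Q ^ 2 * (5 * C / 2 + 1 + δ * (k + 2)) by nlinarith
  by_contra! hr
  have hr₀ : 0 < r := lt_of_le_of_lt (by positivity) hr
  obtain ⟨s₁, hs₁, hu₁, hu₂, hu⟩ := hγ.exists_crossing_left hX hC ht (k := k) (r := r)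
    (by nlinarith [ht.2]) (gp_le_dist_left _ _ _) hr₀
  obtain ⟨s₂, hs₂, hv₁, hv₂, hv⟩ := hγ.exists_crossing_right hX hC ht (k := k) (r := r)
    (by nlinarith [ht.1]) (gp_le_dist_right _ _ _) hr₀
  set w := γ t
  set u := γ s₁
  set v := γ s₂
  have hav : r - (2 * C + 1) - δ * k - δ ≤ gp w (γ a) v := by
    linarith [hX w (γ a) v (γ b), le_min (show r - (2 * C + 1) - δ * k ≤ r by linarith) hv]
  have huv : r - (2 * C + 1) - δ * k - 2 * δ ≤ gp w u v := by
    have hua : r - (2 * C + 1) - δ * k - δ ≤ gp w u (γ a) := by linarith [gp_comm w u (γ a)]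
    linarith [hX w u v (γ a), le_min hua hav]
  have hduv : dist u v ≤ 2 * (2 * C + 1 + δ * k + 2 * δ) := by
    unfold gp at huv
    linarith
  have hs₁I : s₁ ∈ Icc a b := ⟨hs₁.1, hs₁.2.trans ht.2⟩
  have hs₂I : s₂ ∈ Icc a b := ⟨ht.1.trans hs₂.1, hs₂.2⟩
  have hwu := hγ.dist_le hs₁I ht
  have hwv := hγ.dist_le hs₂I ht
  rw [abs_of_nonpos (by linarith [hs₁.2])] at hwu
  rw [abs_of_nonneg (by linarith [hs₂.1])] at hwv
  have hs : 2 * (r - (3 * C + 1)) ≤ Q * (s₂ - s₁) := by linarith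
  have hs' : s₂ - s₁ ≤ Q * (dist u v + C) := by
    have := hγ.abs_sub_le hQ₀ hs₂I hs₁I
    rwa [abs_of_nonneg (by linarith [hs₁.2, hs₂.1]), dist_comm] at this
  nlinarith [mul_le_mul_of_nonneg_left hs' hQ₀.le]

lemma IsGromovHyperbolicWith.gp_le_of_near_left (hX : IsGromovHyperbolicWith X δ) (hQ : 0 < Q)
    {K Λ : ℝ} (hΛ : 0 < Λ) (hfar : Q * (2 * K + 3 * δ + C) < Λ)
    (hwin : ThinQuasiGeodesics X Q C (2 * Λ) K) (hγ : IsQuasiGeodesicOn Q C γ a b)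
    (ht : t ∈ Icc a b) (hta : t - a ≤ Λ) : gp (γ t) (γ a) (γ b) ≤ K + δ := by
  have hδ := hX.nonneg (γ t)
  obtain ⟨N, hN⟩ := exists_nat_ge ((b - t) / Λ)
  rw [div_le_iff₀ hΛ] at hN
  induction N generalizing γ a b t with
  | zero => exact (hwin γ a b (by push_cast at hN; linarith) hγ t ht).trans (by linarith)
  | succ N ih =>
    rcases le_or_gt (b - t) Λ with hb | hb
    · exact (hwin γ a b (by linarith) hγ t ht).trans (by linarith)
    have hvI : t + Λ ∈ Icc t b := ⟨by linarith, by linarith⟩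
    have h₁ := hwin γ a (t + Λ) (by linarith) (hγ.mono (Icc_subset_Icc_right hvI.2)) t
      ⟨ht.1, by linarith⟩
    have h₂ := ih (hγ.mono (Icc_subset_Icc_left ht.1)) hvI (by linarith)
      (by push_cast at hN; linarith)
    have h₃ := hγ.lt_dist hQ ⟨ht.1.trans hvI.1, hvI.2⟩ ht (L := 2 * K + 3 * δ)
      (by rwa [add_sub_cancel_left, abs_of_pos hΛ])
    exact hX.gp_le_of_lt_dist h₁ h₂ (by linarith)

lemma IsGromovHyperbolicWith.gp_le_of_near_right (hX : IsGromovHyperbolicWith X δ) (hQ : 0 < Q)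
    {K Λ : ℝ} (hΛ : 0 < Λ) (hfar : Q * (2 * K + 3 * δ + C) < Λ)
    (hwin : ThinQuasiGeodesics X Q C (2 * Λ) K) (hγ : IsQuasiGeodesicOn Q C γ a b)
    (ht : t ∈ Icc a b) (htb : b - t ≤ Λ) : gp (γ t) (γ a) (γ b) ≤ K + δ := by
  have hrev : a + b - (a + b - t) = t := by ring
  have := hX.gp_le_of_near_left hQ hΛ hfar hwin hγ.reverse (t := a + b - t)
    ⟨by linarith [ht.2], by linarith [ht.1]⟩ (by linarith)
  simp only [hrev, add_sub_cancel_left, add_sub_cancel_right] at this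
  rwa [gp_comm]

lemma IsGromovHyperbolicWith.thinQuasiGeodesics_of_window (hX : IsGromovHyperbolicWith X δ)
    (hQ : 0 < Q) {K Λ : ℝ} (hΛ : 0 < Λ) (hfar : Q * (2 * K + 3 * δ + C) < Λ)
    (hwin : ThinQuasiGeodesics X Q C (2 * Λ) K) (L : ℝ) :
    ThinQuasiGeodesics X Q C L (K + 2 * δ) := by
  intro γ a b _ hγ t ht
  have hδ := hX.nonneg (γ t)
  rcases le_or_gt (b - t) Λ with hb | hb
  · linarith [hX.gp_le_of_near_right hQ hΛ hfar hwin hγ ht hb]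
  have hvI : t + Λ ∈ Icc t b := ⟨by linarith, by linarith⟩
  have h₁ := hX.gp_le_of_near_right hQ hΛ hfar hwin (hγ.mono (Icc_subset_Icc_right hvI.2))
    ⟨ht.1, by linarith⟩ (by linarith)
  have h₂ := hX.gp_le_of_near_left hQ hΛ hfar hwin (hγ.mono (Icc_subset_Icc_left ht.1)) hvI
    (by linarith)
  have h₃ := hγ.lt_dist hQ ⟨ht.1.trans hvI.1, hvI.2⟩ ht (L := 2 * K + 3 * δ)
    (by rwa [add_sub_cancel_left, abs_of_pos hΛ])
  have := hX.gp_le_of_lt_dist h₁ h₂ (by linarith)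
  linarith

lemma IsGromovHyperbolicWith.exists_thinQuasiGeodesics (hX : IsGromovHyperbolicWith X δ)
    (hQ : 1 ≤ Q) (hC : 0 ≤ C) : ∃ K, ∀ L, ThinQuasiGeodesics X Q C L K := by
  have hQ₀ : 0 < Q := by linarith
  -- `k` is chosen so that `Q * 2Λ ≤ 2 ^ k` below, possible since `Λ` is affine in `k`
  obtain ⟨k, hk⟩ := exists_add_mul_le_two_pow
    (2 * Q ^ 2 * (2 * Q ^ 2 * (6 * C + 2 + 2 * δ) + 3 * δ + C + 1)) (4 * Q ^ 4 * δ)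
  set K := Q ^ 2 * (6 * C + 2 + δ * (k + 2))
  set Λ := Q * (2 * K + 3 * δ + C + 1)
  refine ⟨K + 2 * δ, fun L γ a b hL hγ t ht => ?_⟩
  have hδ := hX.nonneg (γ t)
  have hΛ : 0 < Λ := by positivity
  have hΛk : Q * (2 * Λ) ≤ (C + 1) * 2 ^ k := by
    have h2k : (0 : ℝ) ≤ 2 ^ k := by positivity
    have : Q * (2 * Λ) = 2 * Q ^ 2 * (2 * Q ^ 2 * (6 * C + 2 + 2 * δ) + 3 * δ + C + 1) +
        4 * Q ^ 4 * δ * k := by ring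
    nlinarith
  exact hX.thinQuasiGeodesics_of_window hQ₀ hΛ (mul_lt_mul_of_pos_left (by linarith) hQ₀)
    (hX.thinQuasiGeodesics_of_le_two_pow hQ hC hΛk) L γ a b hL hγ t ht

end Morse

theorem shadows_weakly_convex_general (δ : ℝ)
    (hX : IsGromovHyperbolicWith X δ) (Q C : ℝ) (hQ : 1 ≤ Q) (hC : 0 ≤ C) :
    ∃ D : ℝ,
      (∀ (o x : X) (R : ℝ) (γ : ℝ → X) (a b : ℝ), a ≤ b →
        IsQuasiGeodesicOn Q C γ a b →
        γ a ∈ shadow o x R → γ b ∈ shadow o x R →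
        ∀ t ∈ Icc a b, γ t ∈ shadow o x (R + D)) ∧
      (∀ (o x : X) (R : ℝ) (γ : ℝ → X) (a b : ℝ), a ≤ b →
        IsQuasiGeodesicOn Q C γ a b →
        γ a ∉ shadow o x R → γ b ∉ shadow o x R →
        ∀ t ∈ Icc a b, γ t ∉ shadow o x (R - D)) := by
  obtain ⟨K, hK⟩ := hX.exists_thinQuasiGeodesics hQ hC
  refine ⟨2 * K + 3 * δ, fun o x R γ a b _ hγ ha hb t ht => ?_,
    fun o x R γ a b _ hγ ha hb t ht => ?_⟩
  · rw [mem_shadow] at ha hb ⊢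
    have hγt := hK (b - a) γ a b le_rfl hγ t ht
    linarith [hX.gp_le_max_add hγt x o, max_le ha hb, hX.nonneg x, gp_nonneg (γ t) (γ a) (γ b)]
  · rw [mem_shadow, not_le] at ha hb ⊢
    linarith [hX.min_sub_le_gp (hK (b - a) γ a b le_rfl hγ t ht) x o, lt_min ha hb]

/-- **Weak convexity of shadows** (Proposition `cor conv shadows` of the paper). -/
theorem shadows_weakly_convex (δ : ℝ) (hδ : 0 ≤ δ)
    (hX : IsGromovHyperbolicWith X δ) (Q C : ℝ) (hQ : 1 ≤ Q) (hC : 0 ≤ C) :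
    ∃ D : ℝ,
      (∀ (o x : X) (R : ℝ) (γ : ℝ → X) (a b : ℝ), a ≤ b →
        IsQuasiGeodesicOn Q C γ a b →
        γ a ∈ shadow o x R → γ b ∈ shadow o x R →
        ∀ t ∈ Icc a b, γ t ∈ shadow o x (R + D)) ∧
      (∀ (o x : X) (R : ℝ) (γ : ℝ → X) (a b : ℝ), a ≤ b →
        IsQuasiGeodesicOn Q C γ a b →
        γ a ∉ shadow o x R → γ b ∉ shadow o x R →
        ∀ t ∈ Icc a b, γ t ∉ shadow o x (R - D)) :=
  shadows_weakly_convex_general δ hX Q C hQ hC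

end Stmt8
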